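/- Normalization of the Dirichlet density (multivariate Beta integral). Fix K ≥ 2 and α : Fin K → ℝ with α_k > 0 for all k, and set α₀ = ∑_k α_k. Then ∫_S f_α(x) dx = B(α), i.e. the unnormalized Dirichlet density integrates over the open simplex S to the multivariate Beta function B(α) = (∏_k Γ(α_k)) / Γ(α₀). -/

import Mathlib

open MeasureTheory Real
open scoped ENNReal NNReal

/-- The open simplex `S = {x ∈ ℝ^{K-1} | ∀ i, 0 < xᵢ ∧ ∑ i, xᵢ < 1}`. -/
def openSimplex (K : ℕ) : Set (Fin (K - 1) → ℝ) :=
  {x | (∀ i, 0 < x i) ∧ ∑ i, x i < 1}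

/-- The `k`-th barycentric coordinate: `X_k(x) = x_k` for `k < K-1`, and
`X_{K-1}(x) = 1 - ∑ i, x_i`. -/
noncomputable def bary (K : ℕ) (k : Fin K) (x : Fin (K - 1) → ℝ) : ℝ :=
  if h : (k : ℕ) < K - 1 then x ⟨k, h⟩ else 1 - ∑ i, x i

/-- The unnormalized Dirichlet density `f_α(x) = ∏ k, X_k(x)^(α k - 1)`
(real powers). -/
noncomputable def dirichletDensity {K : ℕ} (α : Fin K → ℝ) (x : Fin (K - 1) → ℝ) : ℝ :=
  ∏ k, (bary K k x) ^ (α k - 1)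

/-- The multivariate Beta function `B(α) = (∏ k, Γ(α k)) / Γ(∑ k, α k)`. -/
noncomputable def multiBeta {K : ℕ} (α : Fin K → ℝ) : ℝ :=
  (∏ k, Real.Gamma (α k)) / Real.Gamma (∑ k, α k)

/-!
Integrate out the last coordinate. For fixed `y` in the `(K-2)`-simplex, with `c = 1 - ∑ yᵢ`,
the remaining integral `∫₀ᶜ t^(a-1) (c-t)^(b-1) dt = c^(a+b-1) B(a, b)` is a scaled Beta
integral, and `c^(a+b-1)` is exactly the last factor of the Dirichlet density on the smaller
simplex whose last two parameters `a, b` are merged into `a + b`. Since `B(α)` factors the same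
way, induction on `K` reduces everything to `K = 1`, where both sides equal `1`.
-/

open ProbabilityTheory Set

lemma bary_pos {K : ℕ} {x : Fin (K - 1) → ℝ} (hx : x ∈ openSimplex K) (k : Fin K) :
    0 < bary K k x := by
  unfold bary
  split_ifs
  · exact hx.1 _
  · linarith [hx.2]

lemma dirichletDensity_nonneg {K : ℕ} (α : Fin K → ℝ) {x : Fin (K - 1) → ℝ}
    (hx : x ∈ openSimplex K) : 0 ≤ dirichletDensity α x :=
  Finset.prod_nonneg fun k _ => Real.rpow_nonneg (bary_pos hx k).le _

lemma measurable_bary (K : ℕ) (k : Fin K) : Measurable (bary K k) := by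
  unfold bary
  split_ifs <;> fun_prop

lemma measurable_dirichletDensity {K : ℕ} (α : Fin K → ℝ) :
    Measurable (dirichletDensity α) :=
  Finset.measurable_prod _ fun k _ => (measurable_bary K k).pow_const _

lemma multiBeta_nonneg {K : ℕ} {α : Fin K → ℝ} (hα : ∀ k, 0 ≤ α k) :
    0 ≤ multiBeta α :=
  div_nonneg (Finset.prod_nonneg fun k _ => Real.Gamma_nonneg_of_nonneg (hα k))
    (Real.Gamma_nonneg_of_nonneg (Finset.sum_nonneg fun k _ => hα k))

/-! From here on `K = n + 1`, so that points of the simplex live in `Fin n → ℝ` rather than in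
`Fin (n + 1 - 1) → ℝ`, which `rw` does not identify with it. -/

lemma measurableSet_openSimplex (n : ℕ) :
    MeasurableSet (α := Fin n → ℝ) (openSimplex (n + 1)) := by
  unfold openSimplex
  measurability

lemma mem_openSimplex_succ_iff {n : ℕ} {x : Fin n → ℝ} :
    x ∈ openSimplex (n + 1) ↔ (∀ i, 0 < x i) ∧ ∑ i, x i < 1 := Iff.rfl

lemma dirichletDensity_succ {n : ℕ} (α : Fin (n + 1) → ℝ) (x : Fin n → ℝ) :
    dirichletDensity α x =
      (∏ k, x k ^ (α k.castSucc - 1)) * (1 - ∑ i, x i) ^ (α (Fin.last n) - 1) := by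
  simp [dirichletDensity, Fin.prod_univ_castSucc, bary]

lemma snoc_mem_openSimplex_iff {n : ℕ} (y : Fin n → ℝ) (t : ℝ) :
    (Fin.snoc y t : Fin (n + 1) → ℝ) ∈ openSimplex (n + 2) ↔
      y ∈ openSimplex (n + 1) ∧ t ∈ Ioo 0 (1 - ∑ i, y i) := by
  simp only [mem_openSimplex_succ_iff, Fin.forall_fin_succ', Fin.snoc_castSucc, Fin.snoc_last,
    Fin.sum_univ_castSucc, mem_Ioo]
  constructor
  · rintro ⟨⟨hy, ht⟩, hsum⟩
    exact ⟨⟨hy, by linarith⟩, ht, by linarith⟩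
  · rintro ⟨⟨hy, -⟩, ht, hts⟩
    exact ⟨⟨hy, ht⟩, by linarith⟩

lemma lintegral_eq_lintegral_lintegral_snoc {n : ℕ} {F : (Fin (n + 1) → ℝ) → ℝ≥0∞}
    (hF : Measurable F) :
    ∫⁻ x, F x = ∫⁻ y : Fin n → ℝ, ∫⁻ t : ℝ, F (Fin.snoc y t) := by
  set e := (MeasurableEquiv.piFinSuccAbove (fun _ : Fin (n + 1) => ℝ) (Fin.last n)).symm
  have he : MeasurePreserving e := (volume_preserving_piFinSuccAbove _ _).symm _
  rw [← he.lintegral_comp hF, Measure.volume_eq_prod,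
    lintegral_prod_symm' (fun z => F (e z)) (hF.comp e.measurable)]
  simp [e, MeasurableEquiv.piFinSuccAbove_symm_apply, Fin.insertNthEquiv, Fin.insertNth_last']

lemma setLIntegral_openSimplex_eq_lintegral_lintegral_snoc {n : ℕ}
    {F : (Fin (n + 1) → ℝ) → ℝ≥0∞} (hF : Measurable F) :
    ∫⁻ x : Fin (n + 1) → ℝ in openSimplex (n + 2), F x =
      ∫⁻ y : Fin n → ℝ in openSimplex (n + 1),
        ∫⁻ t in Ioo 0 (1 - ∑ i, y i), F (Fin.snoc y t) := by
  rw [← lintegral_indicator (measurableSet_openSimplex (n + 1)),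
    lintegral_eq_lintegral_lintegral_snoc (hF.indicator (measurableSet_openSimplex (n + 1))),
    ← lintegral_indicator (measurableSet_openSimplex n)]
  congr 1 with y
  by_cases hy : y ∈ openSimplex (n + 1)
  · rw [indicator_of_mem hy, ← lintegral_indicator measurableSet_Ioo]
    congr 1 with t
    by_cases ht : t ∈ Ioo 0 (1 - ∑ i, y i)
    · rw [indicator_of_mem ht]
      exact indicator_of_mem ((snoc_mem_openSimplex_iff y t).2 ⟨hy, ht⟩) F
    · rw [indicator_of_notMem ht]
      exact indicator_of_notMem (fun h => ht ((snoc_mem_openSimplex_iff y t).1 h).2) F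
  · rw [indicator_of_notMem hy]
    exact (lintegral_congr fun t =>
      indicator_of_notMem (fun h => hy ((snoc_mem_openSimplex_iff y t).1 h).1) F).trans
      lintegral_zero

lemma lintegral_Ioo_rpow_mul_one_sub_rpow {a b : ℝ} (ha : 0 < a) (hb : 0 < b) :
    ∫⁻ t in Ioo 0 1, ENNReal.ofReal (t ^ (a - 1) * (1 - t) ^ (b - 1)) =
      ENNReal.ofReal (beta a b) := by
  have hB := beta_pos ha hb
  have h := lintegral_betaPDF_eq_one ha hb
  simp_rw [lintegral_betaPDF, mul_assoc, ENNReal.ofReal_mul (one_div_pos.2 hB).le] at h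
  rw [lintegral_const_mul' _ _ ENNReal.ofReal_ne_top, ENNReal.ofReal_div_of_pos hB,
    ENNReal.ofReal_one, one_div, mul_comm] at h
  rw [ENNReal.eq_inv_of_mul_eq_one_left h, inv_inv]

lemma lintegral_Ioo_rpow_mul_sub_rpow {a b c : ℝ} (ha : 0 < a) (hb : 0 < b) (hc : 0 < c) :
    ∫⁻ t in Ioo 0 c, ENNReal.ofReal (t ^ (a - 1) * (c - t) ^ (b - 1)) =
      ENNReal.ofReal (c ^ (a + b - 1) * beta a b) := by
  have himage : (c * ·) '' Ioo 0 1 = Ioo 0 c := by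
    rw [image_mul_left_Ioo hc, mul_zero, mul_one]
  rw [← himage, lintegral_image_eq_lintegral_deriv_mul_of_monotoneOn measurableSet_Ioo
      (fun u _ => (hasDerivAt_const_mul c).hasDerivWithinAt)
      ((strictMono_mul_left_of_pos hc).monotone.monotoneOn _),
    ENNReal.ofReal_mul (by positivity), ← lintegral_Ioo_rpow_mul_one_sub_rpow ha hb,
    ← lintegral_const_mul' _ _ ENNReal.ofReal_ne_top]
  refine setLIntegral_congr_fun measurableSet_Ioo fun u ⟨hu0, hu1⟩ => ?_
  rw [← ENNReal.ofReal_mul hc.le, ← ENNReal.ofReal_mul (by positivity)]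
  congr 1
  rw [Real.mul_rpow hc.le hu0.le, show c - c * u = c * (1 - u) by ring,
    Real.mul_rpow hc.le (by linarith), show a + b - 1 = (a - 1) + (b - 1) + 1 by ring,
    Real.rpow_add hc, Real.rpow_add hc, Real.rpow_one]
  ring

def mergeLastTwo {n : ℕ} (α : Fin (n + 2) → ℝ) : Fin (n + 1) → ℝ :=
  Fin.snoc (fun k => α k.castSucc.castSucc) (α (Fin.last n).castSucc + α (Fin.last (n + 1)))

lemma dirichletDensity_snoc {n : ℕ} (α : Fin (n + 2) → ℝ) (y : Fin n → ℝ) (t : ℝ) :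
    dirichletDensity α (Fin.snoc y t : Fin (n + 1) → ℝ) =
      (∏ k, y k ^ (α k.castSucc.castSucc - 1)) *
        (t ^ (α (Fin.last n).castSucc - 1) *
          ((1 - ∑ i, y i) - t) ^ (α (Fin.last (n + 1)) - 1)) := by
  rw [dirichletDensity_succ, Fin.prod_univ_castSucc, Fin.sum_univ_castSucc]
  simp only [Fin.snoc_castSucc, Fin.snoc_last, sub_add_eq_sub_sub, mul_assoc]

lemma dirichletDensity_mergeLastTwo {n : ℕ} (α : Fin (n + 2) → ℝ) (y : Fin n → ℝ) :
    dirichletDensity (mergeLastTwo α) y =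
      (∏ k, y k ^ (α k.castSucc.castSucc - 1)) *
        (1 - ∑ i, y i) ^ (α (Fin.last n).castSucc + α (Fin.last (n + 1)) - 1) := by
  simp only [dirichletDensity_succ, mergeLastTwo, Fin.snoc_castSucc, Fin.snoc_last]

lemma multiBeta_eq_beta_mul_multiBeta_mergeLastTwo {n : ℕ} (α : Fin (n + 2) → ℝ)
    (h : 0 < α (Fin.last n).castSucc + α (Fin.last (n + 1))) :
    multiBeta α = beta (α (Fin.last n).castSucc) (α (Fin.last (n + 1))) *
      multiBeta (mergeLastTwo α) := by
  have hΓ := (Real.Gamma_pos_of_pos h).ne'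
  simp only [multiBeta, beta, mergeLastTwo, Fin.prod_univ_castSucc, Fin.sum_univ_castSucc,
    Fin.snoc_castSucc, Fin.snoc_last, add_assoc]
  field_simp

lemma setLIntegral_dirichletDensity_snoc {n : ℕ} {α : Fin (n + 2) → ℝ}
    (ha : 0 < α (Fin.last n).castSucc) (hb : 0 < α (Fin.last (n + 1))) {y : Fin n → ℝ}
    (hy : y ∈ openSimplex (n + 1)) :
    ∫⁻ t in Ioo 0 (1 - ∑ i, y i), ENNReal.ofReal (dirichletDensity α (Fin.snoc y t)) =
      ENNReal.ofReal (beta (α (Fin.last n).castSucc) (α (Fin.last (n + 1)))) *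
        ENNReal.ofReal (dirichletDensity (mergeLastTwo α) y) := by
  obtain ⟨hpos, hsum⟩ := mem_openSimplex_succ_iff.1 hy
  have hc : 0 < 1 - ∑ i, y i := by linarith
  have hP : 0 ≤ ∏ k, y k ^ (α k.castSucc.castSucc - 1) :=
    Finset.prod_nonneg fun k _ => Real.rpow_nonneg (hpos k).le _
  simp_rw [dirichletDensity_snoc, ENNReal.ofReal_mul hP]
  rw [lintegral_const_mul' _ _ ENNReal.ofReal_ne_top, lintegral_Ioo_rpow_mul_sub_rpow ha hb hc,
    dirichletDensity_mergeLastTwo, ← ENNReal.ofReal_mul hP,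
    ← ENNReal.ofReal_mul (beta_pos ha hb).le]
  ring_nf

lemma setLIntegral_dirichletDensity (n : ℕ) (α : Fin (n + 1) → ℝ) (hα : ∀ k, 0 < α k) :
    ∫⁻ x : Fin n → ℝ in openSimplex (n + 1), ENNReal.ofReal (dirichletDensity α x) =
      ENNReal.ofReal (multiBeta α) := by
  induction n with
  | zero =>
    have hS : openSimplex 1 = univ := by ext x; simp [openSimplex]
    simp [hS, dirichletDensity_succ, multiBeta, (Real.Gamma_pos_of_pos (hα 0)).ne', volume_pi]
  | succ n ih =>
    have ha := hα (Fin.last n).castSucc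
    have hb := hα (Fin.last (n + 1))
    have hα' : ∀ k, 0 < mergeLastTwo α k :=
      Fin.lastCases (by simp [mergeLastTwo]; positivity) (fun k => by simp [mergeLastTwo, hα])
    rw [setLIntegral_openSimplex_eq_lintegral_lintegral_snoc
        (measurable_dirichletDensity α).ennreal_ofReal,
      setLIntegral_congr_fun (measurableSet_openSimplex n)
        fun y hy => setLIntegral_dirichletDensity_snoc ha hb hy,
      lintegral_const_mul' _ _ ENNReal.ofReal_ne_top, ih _ hα',
      multiBeta_eq_beta_mul_multiBeta_mergeLastTwo α (by positivity),
      ENNReal.ofReal_mul (beta_pos ha hb).le]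

/-- **Normalization of the Dirichlet density (multivariate Beta integral).**
For `K ≥ 2` and `α` with all entries positive, the unnormalized Dirichlet
density integrates over the open simplex to `B(α)`. -/
theorem integral_dirichletDensity
    (K : ℕ) (hK : 2 ≤ K) (α : Fin K → ℝ) (hα : ∀ k, 0 < α k) :
    ∫ x in openSimplex K, dirichletDensity α x = multiBeta α := by
  obtain ⟨n, rfl⟩ : ∃ n, K = n + 1 := ⟨K - 1, by omega⟩
  change ∫ x : Fin n → ℝ in openSimplex (n + 1), dirichletDensity α x = multiBeta α
  rw [integral_eq_lintegral_of_nonneg_ae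
      (ae_restrict_of_forall_mem (measurableSet_openSimplex n) fun x hx =>
        dirichletDensity_nonneg α hx)
      (measurable_dirichletDensity α).aestronglyMeasurable,
    setLIntegral_dirichletDensity n α hα,
    ENNReal.toReal_ofReal (multiBeta_nonneg fun k => (hα k).le)]
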